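/- arXiv:1411.2021 — 8 statements merged into one kernel-verified Lean document; each statement's English description precedes it below -/
import Mathlib

section
/- If A is an n×n normal matrix with eigenvalues λ_1,...,λ_n and E is any n×n matrix, then every eigenvalue λ̂ of A+E satisfies |λ̂ - λ_i| ≤ ‖E‖ for some i, where ‖E‖ denotes the spectral norm (largest singular value) of E. -/
/-!
Write `A = U D U*` with `D = diagonal λ` and `U` unitary, and let
`x` be an eigenvector of `A + E` for `μ`. Conjugating the eigen-equation by `U*` gives
`(μ - D) (U* x) = U* (E x)`. Since `U*` is an isometry, the right side has norm at most
`‖E‖ ‖x‖ = ‖E‖ ‖U* x‖`, while the diagonal matrix `μ - D` stretches every vector by at least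
`minᵢ |μ - λᵢ|`.
-/

open Matrix WithLp

namespace Matrix

variable {ι 𝕜 : Type*} [RCLike 𝕜] [Fintype ι] [DecidableEq ι]

lemma norm_toEuclideanCLM_apply_of_mem_unitaryGroup {U : Matrix ι ι 𝕜}
    (hU : U ∈ unitaryGroup ι 𝕜) (x : EuclideanSpace 𝕜 ι) :
    ‖toEuclideanCLM (𝕜 := 𝕜) U x‖ = ‖x‖ :=
  ContinuousLinearMap.norm_map_of_mem_unitary (Unitary.map_mem _ hU) x

lemma mul_norm_le_norm_toEuclideanCLM_diagonal_apply {c : ι → 𝕜} {m : ℝ}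
    (hc : ∀ i, m ≤ ‖c i‖) (x : EuclideanSpace 𝕜 ι) :
    m * ‖x‖ ≤ ‖toEuclideanCLM (𝕜 := 𝕜) (diagonal c) x‖ := by
  rcases lt_or_ge m 0 with hm | hm
  · exact (mul_nonpos_of_nonpos_of_nonneg hm.le (norm_nonneg x)).trans (norm_nonneg _)
  refine (sq_le_sq₀ (by positivity) (norm_nonneg _)).mp ?_
  simp only [mul_pow, EuclideanSpace.norm_sq_eq, ofLp_toEuclideanCLM, mulVec_diagonal, norm_mul,
    Finset.mul_sum]
  gcongr with i
  exact hc i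

lemma star_mulVec_mulVec_eq_diagonal_mulVec {A E U : Matrix ι ι 𝕜} (hU : U ∈ unitaryGroup ι 𝕜)
    {lam : ι → 𝕜} (hA : A = U * diagonal lam * star U) {μ : 𝕜} {v : ι → 𝕜}
    (heig : (A + E) *ᵥ v = μ • v) :
    star U *ᵥ (E *ᵥ v) = diagonal (fun i ↦ μ - lam i) *ᵥ (star U *ᵥ v) := by
  have hUA : star U * A = diagonal lam * star U := by
    rw [hA, ← mul_assoc, ← mul_assoc, mem_unitaryGroup_iff'.mp hU, one_mul]
  have hEv : E *ᵥ v = μ • v - A *ᵥ v := by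
    rw [← heig, add_mulVec, add_sub_cancel_left]
  have hdiag : diagonal (fun i ↦ μ - lam i) = μ • (1 : Matrix ι ι 𝕜) - diagonal lam := by
    rw [smul_one_eq_diagonal, diagonal_sub]
  rw [hEv, mulVec_sub, mulVec_mulVec, hUA, hdiag, sub_mulVec, ← mulVec_mulVec, mulVec_smul,
    smul_mulVec, one_mulVec]

theorem exists_norm_sub_le_norm_toEuclideanCLM_of_mulVec_eq_smul {A E U : Matrix ι ι 𝕜}
    (hU : U ∈ unitaryGroup ι 𝕜) {lam : ι → 𝕜} (hA : A = U * diagonal lam * star U) {μ : 𝕜}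
    {v : ι → 𝕜} (hv : v ≠ 0) (heig : (A + E) *ᵥ v = μ • v) :
    ∃ i, ‖μ - lam i‖ ≤ ‖toEuclideanCLM (𝕜 := 𝕜) E‖ := by
  obtain ⟨j, -⟩ := Function.ne_iff.mp hv
  have : Nonempty ι := ⟨j⟩
  obtain ⟨i, hi⟩ := Finite.exists_min fun j ↦ ‖μ - lam j‖
  refine ⟨i, le_of_mul_le_mul_right ?_ (norm_pos_iff.mpr ((toLp_eq_zero 2).not.mpr hv))⟩
  have hstarU : star U ∈ unitaryGroup ι 𝕜 := Unitary.star_mem hU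
  calc ‖μ - lam i‖ * ‖toLp 2 v‖
      = ‖μ - lam i‖ * ‖toEuclideanCLM (𝕜 := 𝕜) (star U) (toLp 2 v)‖ := by
        rw [norm_toEuclideanCLM_apply_of_mem_unitaryGroup hstarU]
    _ ≤ ‖toEuclideanCLM (𝕜 := 𝕜) (diagonal fun j ↦ μ - lam j)
          (toEuclideanCLM (𝕜 := 𝕜) (star U) (toLp 2 v))‖ :=
        mul_norm_le_norm_toEuclideanCLM_diagonal_apply hi _
    _ = ‖toEuclideanCLM (𝕜 := 𝕜) (star U) (toEuclideanCLM (𝕜 := 𝕜) E (toLp 2 v))‖ := by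
        simp only [toEuclideanCLM_toLp, star_mulVec_mulVec_eq_diagonal_mulVec hU hA heig]
    _ = ‖toEuclideanCLM (𝕜 := 𝕜) E (toLp 2 v)‖ :=
        norm_toEuclideanCLM_apply_of_mem_unitaryGroup hstarU _
    _ ≤ ‖toEuclideanCLM (𝕜 := 𝕜) E‖ * ‖toLp 2 v‖ := ContinuousLinearMap.le_opNorm _ _

end Matrix

theorem stmt_3_general (n : ℕ) (A E : Matrix (Fin n) (Fin n) ℂ)
    (lam : Fin n → ℂ) (U : Matrix.unitaryGroup (Fin n) ℂ)
    (hdiag : A = (U : Matrix (Fin n) (Fin n) ℂ) * Matrix.diagonal lam * (star U : Matrix.unitaryGroup (Fin n) ℂ))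
    (μ : ℂ) (v : Fin n → ℂ) (hv : v ≠ 0) (heig : (A + E).mulVec v = μ • v) :
    ∃ i : Fin n, ‖μ - lam i‖ ≤ ‖Matrix.toEuclideanCLM (𝕜 := ℂ) E‖ :=
  exists_norm_sub_le_norm_toEuclideanCLM_of_mulVec_eq_smul U.2 hdiag hv heig

/-- If `A` is an `n × n` normal complex matrix with eigenvalues
`lam 1, ..., lam n` (i.e. `A = U diag(lam) U*` for a unitary `U`) and `E` is any
`n × n` complex matrix, then every eigenvalue `μ` of `A + E` is within spectral-norm
distance `‖E‖` of some `lam i`. -/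
theorem stmt_3 (n : ℕ) (A E : Matrix (Fin n) (Fin n) ℂ)
    (hnormal : A * A.conjTranspose = A.conjTranspose * A)
    (lam : Fin n → ℂ) (U : Matrix.unitaryGroup (Fin n) ℂ)
    (hdiag : A = (U : Matrix (Fin n) (Fin n) ℂ) * Matrix.diagonal lam * (star U : Matrix.unitaryGroup (Fin n) ℂ))
    (μ : ℂ) (v : Fin n → ℂ) (hv : v ≠ 0) (heig : (A + E).mulVec v = μ • v) :
    ∃ i : Fin n, ‖μ - lam i‖ ≤ ‖Matrix.toEuclideanCLM (𝕜 := ℂ) E‖ :=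
  stmt_3_general n A E lam U hdiag μ v hv heig
end

section
/- Let f_1,...,f_k be orthonormal vectors in ℝ^n, let ḡ_1,...,ḡ_k be orthonormal vectors in ℝ^n, and suppose each f̂_i (the projection of ḡ_i onto span{f_1,...,f_k}) satisfies ‖ḡ_i - f̂_i‖² ≤ 1/Υ with Υ = Ω(k²) sufficiently large. Then span{f̂_1,...,f̂_k} = span{f_1,...,f_k}, and for each i there exist coefficients β^(i)_1,...,β^(i)_k such that ‖f_i - Σ_j β^(i)_j ḡ_j‖² ≤ 1.1 k/Υ. -/
open Finset RealInnerProductSpace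

/-- Let `f 1, ..., f k` and `gbar 1, ..., gbar k` be orthonormal
families in `ℝⁿ`, and let `fhat i` be the orthogonal projection of `gbar i`
onto `K = span{f 1, ..., f k}` (characterized by `fhat i ∈ K` and
`gbar i - fhat i ∈ Kᗮ`), with `‖gbar i - fhat i‖² ≤ 1/Υ` for all `i`, where
`Υ ≥ 100 k²`. Then `span{fhat i} = span{f i}`, and each `f i` is approximated
by a linear combination of the `gbar j` within squared error `1.1 k / Υ`. -/
theorem stmt_4 (n k : ℕ) (Υ : ℝ) (hΥ : 100 * (k : ℝ) ^ 2 ≤ Υ)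
    (f gbar : Fin k → EuclideanSpace ℝ (Fin n))
    (hf : Orthonormal ℝ f) (hg : Orthonormal ℝ gbar)
    (K : Submodule ℝ (EuclideanSpace ℝ (Fin n)))
    (hK : K = Submodule.span ℝ (Set.range f))
    (fhat : Fin k → EuclideanSpace ℝ (Fin n))
    (hmem : ∀ i, fhat i ∈ K)
    (hproj : ∀ i, gbar i - fhat i ∈ Kᗮ)
    (hclose : ∀ i, ‖gbar i - fhat i‖ ^ 2 ≤ 1 / Υ) :
    Submodule.span ℝ (Set.range fhat) = K ∧
      ∀ i : Fin k, ∃ β : Fin k → ℝ,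
        ‖f i - ∑ j, β j • gbar j‖ ^ 2 ≤ 1.1 * k / Υ := by
  classical
  rcases Nat.eq_zero_or_pos k with hk | hk
  · subst hk
    constructor
    · rw [hK]
      simp [Set.range_eq_empty]
    · exact fun i => i.elim0
  · have hk1 : (1 : ℝ) ≤ k := by exact_mod_cast hk
    have hΥpos : (0 : ℝ) < Υ := lt_of_lt_of_le (by nlinarith) hΥ
    have hkΥ : (k : ℝ) / Υ ≤ 1 / 100 := by
      rw [div_le_div_iff₀ hΥpos (by norm_num)]
      nlinarith
    have hkΥ0 : (0 : ℝ) ≤ (k : ℝ) / Υ := by positivity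
    set d : Fin k → EuclideanSpace ℝ (Fin n) := fun j => gbar j - fhat j with hd
    -- Key estimate A
    have keyA : ∀ β : Fin k → ℝ,
        ‖∑ j, β j • d j‖ ^ 2 ≤ (k : ℝ) / Υ * ∑ j, β j ^ 2 := by
      intro β
      have h1 : ‖∑ j, β j • d j‖ ≤ ∑ j, |β j| * ‖d j‖ := by
        refine (norm_sum_le _ _).trans_eq ?_
        simp [norm_smul]
      have h2 : (∑ j, |β j| * ‖d j‖) ^ 2 ≤ (∑ j, |β j| ^ 2) * ∑ j, ‖d j‖ ^ 2 :=
        Finset.sum_mul_sq_le_sq_mul_sq univ _ _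
      have h3 : ∑ j, ‖d j‖ ^ 2 ≤ (k : ℝ) * (1 / Υ) := by
        calc ∑ j, ‖d j‖ ^ 2 ≤ ∑ _j : Fin k, (1 / Υ) :=
              Finset.sum_le_sum fun j _ => hclose j
          _ = (k : ℝ) * (1 / Υ) := by simp [mul_comm]
      have h4 : ∑ j, |β j| ^ 2 = ∑ j, β j ^ 2 := by simp [sq_abs]
      have h5 : ‖∑ j, β j • d j‖ ^ 2 ≤ (∑ j, |β j| * ‖d j‖) ^ 2 :=
        pow_le_pow_left₀ (norm_nonneg _) h1 2
      have h6 : (0 : ℝ) ≤ ∑ j, β j ^ 2 :=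
        Finset.sum_nonneg fun j _ => sq_nonneg _
      calc ‖∑ j, β j • d j‖ ^ 2 ≤ (∑ j, β j ^ 2) * ∑ j, ‖d j‖ ^ 2 := by
            rw [← h4]; exact h5.trans h2
        _ ≤ (∑ j, β j ^ 2) * ((k : ℝ) * (1 / Υ)) :=
            mul_le_mul_of_nonneg_left h3 h6
        _ = (k : ℝ) / Υ * ∑ j, β j ^ 2 := by ring
    -- Key identity B (Pythagoras)
    have keyB : ∀ β : Fin k → ℝ,
        ‖∑ j, β j • fhat j‖ ^ 2 + ‖∑ j, β j • d j‖ ^ 2 = ∑ j, β j ^ 2 := by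
      intro β
      have hsum : ∑ j, β j • gbar j = (∑ j, β j • fhat j) + ∑ j, β j • d j := by
        rw [← Finset.sum_add_distrib]
        refine Finset.sum_congr rfl fun j _ => ?_
        simp [hd, smul_sub]
      have hK1 : (∑ j, β j • fhat j) ∈ K :=
        Submodule.sum_mem _ fun j _ => Submodule.smul_mem _ _ (hmem j)
      have hK2 : (∑ j, β j • d j) ∈ Kᗮ :=
        Submodule.sum_mem _ fun j _ => Submodule.smul_mem _ _ (hproj j)
      have hinner : ⟪(∑ j, β j • fhat j), (∑ j, β j • d j)⟫ = (0 : ℝ) :=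
        Submodule.inner_right_of_mem_orthogonal hK1 hK2
      have hpyth : ‖∑ j, β j • gbar j‖ ^ 2
          = ‖∑ j, β j • fhat j‖ ^ 2 + ‖∑ j, β j • d j‖ ^ 2 := by
        rw [hsum, norm_add_sq_real, hinner]; ring
      have hgn : ‖∑ j, β j • gbar j‖ ^ 2 = ∑ j, β j ^ 2 := by
        rw [← real_inner_self_eq_norm_sq, hg.inner_sum]
        simp [sq]
      linarith [hpyth, hgn]
    -- linear independence of fhat
    have hlin : LinearIndependent ℝ fhat := by
      rw [Fintype.linearIndependent_iff]
      intro β hβ i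
      have hA := keyA β
      have hB := keyB β
      rw [hβ] at hB
      simp only [norm_zero] at hB
      have h6 : (0 : ℝ) ≤ ∑ j, β j ^ 2 :=
        Finset.sum_nonneg fun j _ => sq_nonneg _
      have hmul : (k : ℝ) / Υ * ∑ j, β j ^ 2 ≤ 1 / 100 * ∑ j, β j ^ 2 :=
        mul_le_mul_of_nonneg_right hkΥ h6
      have hS : ∑ j, β j ^ 2 ≤ 0 := by nlinarith
      have hbi : β i ^ 2 ≤ 0 :=
        le_trans (Finset.single_le_sum (fun j _ => sq_nonneg (β j)) (mem_univ i)) hS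
      nlinarith [sq_nonneg (β i)]
    have hspan : Submodule.span ℝ (Set.range fhat) = K := by
      have hle : Submodule.span ℝ (Set.range fhat) ≤ K :=
        Submodule.span_le.mpr (Set.range_subset_iff.mpr hmem)
      have h1 : Module.finrank ℝ (Submodule.span ℝ (Set.range fhat)) = k := by
        rw [finrank_span_eq_card hlin, Fintype.card_fin]
      have h2 : Module.finrank ℝ K = k := by
        rw [hK, finrank_span_eq_card hf.linearIndependent, Fintype.card_fin]
      exact Submodule.eq_of_le_of_finrank_le hle (by rw [h1, h2])
    refine ⟨hspan, fun i => ?_⟩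
    have hfiK : f i ∈ Submodule.span ℝ (Set.range fhat) := by
      rw [hspan, hK]
      exact Submodule.subset_span ⟨i, rfl⟩
    obtain ⟨β, hβ⟩ := (Submodule.mem_span_range_iff_exists_fun ℝ).mp hfiK
    refine ⟨β, ?_⟩
    have hdiff : f i - ∑ j, β j • gbar j = -(∑ j, β j • d j) := by
      rw [← hβ, ← Finset.sum_neg_distrib, ← Finset.sum_sub_distrib]
      refine Finset.sum_congr rfl fun j _ => ?_
      simp [hd, smul_sub]
    have hnorm : ‖f i - ∑ j, β j • gbar j‖ = ‖∑ j, β j • d j‖ := by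
      rw [hdiff, norm_neg]
    have hA := keyA β
    have hB := keyB β
    rw [hβ] at hB
    have hf1 : ‖f i‖ = 1 := hf.1 i
    rw [hf1] at hB
    have hDnn : (0 : ℝ) ≤ ‖∑ j, β j • d j‖ ^ 2 := sq_nonneg _
    have h6 : (0 : ℝ) ≤ ∑ j, β j ^ 2 :=
      Finset.sum_nonneg fun j _ => sq_nonneg _
    rw [hnorm]
    have hgoal : (1.1 : ℝ) * k / Υ = 1.1 * ((k : ℝ) / Υ) := by ring
    rw [hgoal]
    have hmul : (k : ℝ) / Υ * ∑ j, β j ^ 2 ≤ 1 / 100 * ∑ j, β j ^ 2 :=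
      mul_le_mul_of_nonneg_right hkΥ h6
    have hS : ∑ j, β j ^ 2 ≤ 100 / 99 := by norm_num at hB; linarith
    have hD : ‖∑ j, β j • d j‖ ^ 2 ≤ (k : ℝ) / Υ * (100 / 99) :=
      hA.trans (mul_le_mul_of_nonneg_left hS hkΥ0)
    linarith [hD, hkΥ0]
end

section
/- Let B be a k×k real matrix whose columns β^(1),...,β^(k) satisfy ‖β^(i)‖² ≥ 1 - δ and |⟨β^(i),β^(j)⟩| ≤ δ for i ≠ j with δ = 2.2√(k/Υ)+1.1k/Υ and Υ = Ω(k³) sufficiently large. Then for every pair of distinct row indices ℓ ≠ j there exists a column index i such that |B_{ℓ,i} - B_{j,i}| ≥ 1/(10√k). -/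
/-- Let `B` be a `k × k` real matrix whose columns `β i = B · i`
satisfy `‖β i‖² ≥ 1 - δ` and `|⟨β i, β j⟩| ≤ δ` for `i ≠ j`, where
`δ = 2.2 √(k/Υ) + 1.1 k/Υ` and `Υ ≥ 100 k³`. Then any two distinct rows of `B`
differ by at least `1/(10 √k)` in some coordinate. -/
theorem stmt_6 (k : ℕ) (Υ : ℝ) (hΥ : 100 * (k : ℝ) ^ 3 ≤ Υ)
    (B : Matrix (Fin k) (Fin k) ℝ)
    (δ : ℝ) (hδ : δ = 2.2 * Real.sqrt (k / Υ) + 1.1 * k / Υ)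
    (hnorm : ∀ i : Fin k, 1 - δ ≤ ∑ ℓ, B ℓ i ^ 2)
    (hinner : ∀ i j : Fin k, i ≠ j → |∑ ℓ, B ℓ i * B ℓ j| ≤ δ) :
    ∀ ℓ j : Fin k, ℓ ≠ j →
      ∃ i : Fin k, 1 / (10 * Real.sqrt k) ≤ |B ℓ i - B j i| := by
  intro ℓ j hlj
  by_contra hcon
  push_neg at hcon
  have hk1 : (1 : ℝ) ≤ (k : ℝ) := by
    have : 0 < k := Fin.pos ℓ
    exact_mod_cast this
  have hkpos : (0 : ℝ) < k := lt_of_lt_of_le one_pos hk1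
  have hΥpos : (0 : ℝ) < Υ := lt_of_lt_of_le (by positivity) hΥ
  -- bound on k * δ
  have hkδ : (k : ℝ) * δ ≤ 0.3 := by
    have h1 : (k : ℝ) / Υ ≤ 1 / (100 * k ^ 2) := by
      rw [div_le_div_iff₀ hΥpos (by positivity)]
      nlinarith
    have h2 : Real.sqrt ((k : ℝ) / Υ) ≤ 1 / (10 * k) := by
      rw [show (1 : ℝ) / (10 * k) = Real.sqrt ((1 / (10 * k)) ^ 2) by
        rw [Real.sqrt_sq (by positivity)]]
      apply Real.sqrt_le_sqrt
      calc (k:ℝ)/Υ ≤ 1 / (100 * k^2) := h1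
        _ = (1/(10*k))^2 := by field_simp; ring
    rw [hδ]
    have h3 : (k : ℝ) * (2.2 * Real.sqrt (k / Υ)) ≤ 0.22 := by
      calc (k : ℝ) * (2.2 * Real.sqrt (k / Υ)) ≤ (k : ℝ) * (2.2 * (1 / (10 * k))) := by
            apply mul_le_mul_of_nonneg_left _ (le_of_lt hkpos)
            linarith [h2]
        _ = 0.22 := by field_simp; ring
    have h4 : (k : ℝ) * (1.1 * k / Υ) ≤ 0.011 := by
      have : (1.1 : ℝ) * k / Υ = 1.1 * (k / Υ) := by ring
      rw [this]
      calc (k : ℝ) * (1.1 * (k / Υ)) ≤ (k : ℝ) * (1.1 * (1 / (100 * k ^ 2))) := by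
            apply mul_le_mul_of_nonneg_left _ (le_of_lt hkpos)
            linarith [h1]
        _ = 1.1 / (100 * k) := by field_simp
        _ ≤ 0.011 := by
            rw [div_le_iff₀ (by positivity)]
            nlinarith
    nlinarith
  have hδ0 : 0 ≤ δ := by
    rw [hδ]; positivity
  -- key quadratic form bound
  have key : ∀ w : Fin k → ℝ,
      (1 - k * δ) * ∑ i, w i ^ 2 ≤ ∑ m, (∑ i, B m i * w i) ^ 2 := by
    intro w
    have expand : ∑ m, (∑ i, B m i * w i) ^ 2
        = ∑ i, ∑ i', (w i * w i') * ∑ m, B m i * B m i' := by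
      simp_rw [sq, Finset.sum_mul_sum, Finset.mul_sum]
      rw [Finset.sum_comm]
      refine Finset.sum_congr rfl fun i _ => ?_
      rw [Finset.sum_comm]
      refine Finset.sum_congr rfl fun i' _ => ?_
      refine Finset.sum_congr rfl fun m _ => by ring
    rw [expand]
    have split : ∀ i : Fin k, ∑ i', (w i * w i') * ∑ m, B m i * B m i'
        = (w i ^ 2) * (∑ m, B m i ^ 2)
          + ∑ i' ∈ Finset.univ \ {i}, (w i * w i') * ∑ m, B m i * B m i' := by
      intro i
      rw [Finset.sum_eq_sum_sdiff_singleton_add (Finset.mem_univ i), add_comm]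
      congr 1
      have : ∑ m, B m i * B m i = ∑ m, B m i ^ 2 :=
        Finset.sum_congr rfl fun m _ => (sq (B m i)).symm
      rw [this]; ring
    have hdiag : ∀ i : Fin k, (1 - δ) * w i ^ 2 ≤ (w i ^ 2) * (∑ m, B m i ^ 2) := by
      intro i
      rw [mul_comm (w i ^ 2)]
      exact mul_le_mul_of_nonneg_right (hnorm i) (sq_nonneg _)
    have hoff : ∀ i : Fin k, - (δ * ∑ i' ∈ Finset.univ \ {i}, |w i| * |w i'|)
        ≤ ∑ i' ∈ Finset.univ \ {i}, (w i * w i') * ∑ m, B m i * B m i' := by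
      intro i
      rw [neg_le, ← Finset.sum_neg_distrib, Finset.mul_sum]
      apply Finset.sum_le_sum
      intro i' hi'
      have hne : i ≠ i' := by
        intro h; subst h; simp at hi'
      have := hinner i i' hne
      have habs : |(w i * w i') * ∑ m, B m i * B m i'| ≤ |w i| * |w i'| * δ := by
        rw [abs_mul, abs_mul]
        exact mul_le_mul_of_nonneg_left this (by positivity)
      have := neg_abs_le ((w i * w i') * ∑ m, B m i * B m i')
      nlinarith [abs_nonneg ((w i * w i') * ∑ m, B m i * B m i')]
    -- Cauchy-Schwarz: (∑|w|)^2 ≤ k ∑ w^2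
    have hCS : (∑ i, |w i|) ^ 2 ≤ (k : ℝ) * ∑ i, w i ^ 2 := by
      have := Finset.sum_mul_sq_le_sq_mul_sq Finset.univ (fun i => |w i|) (fun _ => 1)
      simp only [mul_one, one_pow, Finset.sum_const, Finset.card_univ, Fintype.card_fin,
        nsmul_eq_mul, sq_abs] at this
      calc (∑ i, |w i|) ^ 2 ≤ (∑ i, w i ^ 2) * k := this
        _ = (k : ℝ) * ∑ i, w i ^ 2 := by ring
    have hsum_off : ∑ i, ∑ i' ∈ Finset.univ \ {i}, |w i| * |w i'|
        = (∑ i, |w i|) ^ 2 - ∑ i, w i ^ 2 := by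
      have : ∀ i : Fin k, ∑ i' ∈ Finset.univ \ {i}, |w i| * |w i'|
          = (∑ i', |w i| * |w i'|) - |w i| * |w i| := by
        intro i
        rw [Finset.sum_eq_sum_sdiff_singleton_add (Finset.mem_univ i)]
        ring
      simp_rw [this, Finset.sum_sub_distrib, ← Finset.mul_sum, ← Finset.sum_mul, sq, abs_mul_abs_self]
    calc (1 - k * δ) * ∑ i, w i ^ 2
        = (1 - δ) * (∑ i, w i ^ 2) - δ * ((k : ℝ) * (∑ i, w i ^ 2) - ∑ i, w i ^ 2) := by ring
      _ ≤ (1 - δ) * (∑ i, w i ^ 2) - δ * ((∑ i, |w i|) ^ 2 - ∑ i, w i ^ 2) := by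
          nlinarith [hCS]
      _ = ∑ i, ((1 - δ) * w i ^ 2) - δ * ∑ i, ∑ i' ∈ Finset.univ \ {i}, |w i| * |w i'| := by
          rw [hsum_off, ← Finset.mul_sum]
      _ ≤ ∑ i, ((w i ^ 2) * (∑ m, B m i ^ 2)
            + ∑ i' ∈ Finset.univ \ {i}, (w i * w i') * ∑ m, B m i * B m i') := by
          rw [Finset.mul_sum, ← Finset.sum_sub_distrib]
          apply Finset.sum_le_sum
          intro i _
          have := hdiag i
          have := hoff i
          linarith
      _ = ∑ i, ∑ i', (w i * w i') * ∑ m, B m i * B m i' := by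
          exact Finset.sum_congr rfl fun i _ => (split i).symm
  have hpos : (0:ℝ) < 1 - k * δ := by linarith
  -- B is invertible as a linear map
  have hinj : Function.Injective B.mulVecLin := by
    rw [← LinearMap.ker_eq_bot, LinearMap.ker_eq_bot']
    intro w hw
    have h0 : ∀ m, (B.mulVecLin w) m = 0 := fun m => by rw [hw]; rfl
    have : (1 - k * δ) * ∑ i, w i ^ 2 ≤ 0 := by
      have := key w
      have heq : ∑ m, (∑ i, B m i * w i) ^ 2 = 0 := by
        apply Finset.sum_eq_zero
        intro m _
        have := h0 m
        simp only [Matrix.mulVecLin_apply, Matrix.mulVec, dotProduct] at this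
        rw [this, zero_pow]; norm_num
      linarith [key w, heq ▸ key w]
    have hsq : ∑ i, w i ^ 2 ≤ 0 := by
      by_contra h
      push_neg at h
      nlinarith
    funext i
    have : w i ^ 2 = 0 := by
      have h1 : ∀ i ∈ Finset.univ, (0:ℝ) ≤ w i ^ 2 := fun _ _ => sq_nonneg _
      have h2 := Finset.sum_nonneg h1
      have : ∑ i, w i ^ 2 = 0 := le_antisymm hsq h2
      exact (Finset.sum_eq_zero_iff_of_nonneg h1).mp this i (Finset.mem_univ i)
    have := sq_eq_zero_iff.mp this
    simpa using this
  have hsurj : Function.Surjective B.mulVecLin :=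
    (LinearMap.injective_iff_surjective).mp hinj
  set v : Fin k → ℝ := fun m => if m = ℓ then 1 else if m = j then -1 else 0 with hv
  obtain ⟨w, hw⟩ := hsurj v
  have hmv : ∀ m, ∑ i, B m i * w i = v m := by
    intro m
    have := congrFun hw m
    simpa [Matrix.mulVecLin_apply, Matrix.mulVec, dotProduct] using this
  have hvsq : ∑ m, v m ^ 2 = 2 := by
    have : ∀ m, v m ^ 2 = (if m = ℓ then (1:ℝ) else 0) + (if m = j then 1 else 0) := by
      intro m
      by_cases h1 : m = ℓ
      · subst h1
        simp [hv, hlj]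
      · by_cases h2 : m = j
        · subst h2
          simp [hv, h1]
        · simp [hv, h1, h2]
    simp_rw [this, Finset.sum_add_distrib, Finset.sum_ite_eq' Finset.univ, Finset.mem_univ]
    norm_num
  -- S = ∑ w², we have (1 - kδ) S ≤ 2
  have hS2 : (1 - k * δ) * ∑ i, w i ^ 2 ≤ 2 := by
    have := key w
    simp_rw [hmv] at this
    rw [hvsq] at this
    exact this
  have hSle : ∑ i, w i ^ 2 ≤ 2 / (1 - k * δ) := by
    rw [le_div_iff₀ hpos]; linarith [hS2]
  -- ∑ (B ℓ i - B j i) * w i = 2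
  have hdot : ∑ i, (B ℓ i - B j i) * w i = 2 := by
    have : ∑ i, (B ℓ i - B j i) * w i
        = (∑ i, B ℓ i * w i) - ∑ i, B j i * w i := by
      rw [← Finset.sum_sub_distrib]
      exact Finset.sum_congr rfl fun i _ => by ring
    rw [this, hmv ℓ, hmv j]
    simp only [hv]
    simp [hlj, Ne.symm hlj]
    norm_num
  -- small differences bound
  have hsqk : 0 < Real.sqrt k := Real.sqrt_pos.mpr hkpos
  have hu : ∑ i, (B ℓ i - B j i) ^ 2 ≤ 1 / 100 := by
    calc ∑ i, (B ℓ i - B j i) ^ 2 ≤ ∑ _i : Fin k, (1 / (10 * Real.sqrt k)) ^ 2 := by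
          apply Finset.sum_le_sum
          intro i _
          have := le_of_lt (hcon i)
          calc (B ℓ i - B j i) ^ 2 = |B ℓ i - B j i| ^ 2 := (sq_abs _).symm
            _ ≤ (1 / (10 * Real.sqrt k)) ^ 2 := by
                apply sq_le_sq' _ this
                linarith [abs_nonneg (B ℓ i - B j i)]
      _ = k * (1 / (10 * Real.sqrt k)) ^ 2 := by
          rw [Finset.sum_const, Finset.card_univ, Fintype.card_fin, nsmul_eq_mul]
      _ = 1 / 100 := by
          rw [div_pow, one_pow, mul_pow, Real.sq_sqrt (le_of_lt hkpos)]
          field_simp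
          ring
  -- Cauchy-Schwarz contradiction
  have hcs := Finset.sum_mul_sq_le_sq_mul_sq Finset.univ (fun i => B ℓ i - B j i) w
  rw [hdot] at hcs
  have hS0 : 0 ≤ ∑ i, w i ^ 2 := Finset.sum_nonneg fun _ _ => sq_nonneg _
  have : (2:ℝ)^2 ≤ (1/100) * (2 / (1 - k * δ)) := by
    calc (2:ℝ)^2 ≤ (∑ i, (B ℓ i - B j i) ^ 2) * ∑ i, w i ^ 2 := hcs
      _ ≤ (1/100) * (2 / (1 - k * δ)) := by
          apply mul_le_mul hu hSle hS0 (by norm_num)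
  have h27 : 2 / (1 - k * δ) ≤ 2 / 0.7 := by
    apply div_le_div_of_nonneg_left (by norm_num) (by norm_num) (by linarith)
  nlinarith
end

section
/- For the spectral embedding F(u) = (1/√d_u)(f_1(u),...,f_k(u)) and approximate centers p^(i) = (1/√vol(S_i))(β^(1)_i,...,β^(k)_i), it holds that Σ_{i=1}^k Σ_{u∈S_i} d_u ‖F(u) - p^(i)‖² ≤ 1.1 k²/Υ. -/
/-- For the spectral embedding `F(u) = (1/√d_u)(f_1(u),…,f_k(u))`
and the approximate centers `p i = (1/√vol(S i))(β 1 i, …, β k i)`, where the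
structure theorem gives `‖f j - ∑ i β j i • gbar i‖² ≤ 1.1 k/Υ` for the
normalized indicator vectors `gbar i = D^{1/2}𝟙_{S i}/‖D^{1/2}𝟙_{S i}‖`, we
have `∑_i ∑_{u ∈ S i} d u ‖F(u) - p i‖² ≤ 1.1 k²/Υ`. -/
theorem stmt_7 (n k : ℕ) (Υ : ℝ) (hΥ : 0 < Υ)
    (d : Fin n → ℝ) (hd : ∀ u, 0 < d u)
    (S : Fin k → Finset (Fin n))
    (hdisj : ∀ i j, i ≠ j → Disjoint (S i) (S j))
    (hcover : Finset.univ.biUnion S = Finset.univ)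
    (vol : Fin k → ℝ) (hvol : ∀ i, vol i = ∑ u ∈ S i, d u)
    (f : Fin k → Fin n → ℝ)
    (gbar : Fin k → Fin n → ℝ)
    (hgbar : ∀ i u, gbar i u = if u ∈ S i then Real.sqrt (d u) / Real.sqrt (vol i) else 0)
    (β : Fin k → Fin k → ℝ)
    (hstruct : ∀ j : Fin k, (∑ u, (f j u - ∑ i, β j i * gbar i u) ^ 2) ≤ 1.1 * k / Υ)
    (F : Fin n → Fin k → ℝ) (hF : ∀ u j, F u j = f j u / Real.sqrt (d u))
    (p : Fin k → Fin k → ℝ) (hp : ∀ i j, p i j = β j i / Real.sqrt (vol i)) :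
    (∑ i, ∑ u ∈ S i, d u * ∑ j, (F u j - p i j) ^ 2) ≤ 1.1 * k ^ 2 / Υ := by
  have key : ∀ i : Fin k, ∀ u ∈ S i, d u * ∑ j, (F u j - p i j) ^ 2
      = ∑ j, (f j u - ∑ i', β j i' * gbar i' u) ^ 2 := by
    intro i u hu
    have hdu := hd u
    have hvoli : 0 < vol i := by
      rw [hvol]
      exact Finset.sum_pos (fun v _ => hd v) ⟨u, hu⟩
    rw [Finset.mul_sum]
    refine Finset.sum_congr rfl fun j _ => ?_
    have hsum : ∑ i', β j i' * gbar i' u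
        = β j i * (Real.sqrt (d u) / Real.sqrt (vol i)) := by
      rw [Finset.sum_eq_single i]
      · rw [hgbar, if_pos hu]
      · intro i' _ hi'
        rw [hgbar, if_neg, mul_zero]
        exact fun hu' => Finset.disjoint_left.mp (hdisj i' i hi') hu' hu
      · exact fun h => absurd (Finset.mem_univ i) h
    rw [hsum, hF, hp]
    have h1 : Real.sqrt (d u) ≠ 0 := by positivity
    have h2 : Real.sqrt (vol i) ≠ 0 := by positivity
    have hmul : Real.sqrt (d u) * (f j u / Real.sqrt (d u) - β j i / Real.sqrt (vol i))
        = f j u - β j i * (Real.sqrt (d u) / Real.sqrt (vol i)) := by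
      field_simp
    calc d u * (f j u / Real.sqrt (d u) - β j i / Real.sqrt (vol i)) ^ 2
        = (Real.sqrt (d u) * (f j u / Real.sqrt (d u) - β j i / Real.sqrt (vol i))) ^ 2 := by
          rw [mul_pow, Real.sq_sqrt hdu.le]
      _ = (f j u - β j i * (Real.sqrt (d u) / Real.sqrt (vol i))) ^ 2 := by rw [hmul]
  calc (∑ i, ∑ u ∈ S i, d u * ∑ j, (F u j - p i j) ^ 2)
      = ∑ i, ∑ u ∈ S i, ∑ j, (f j u - ∑ i', β j i' * gbar i' u) ^ 2 :=
        Finset.sum_congr rfl fun i _ => Finset.sum_congr rfl fun u hu => key i u hu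
    _ = ∑ u ∈ Finset.univ.biUnion S, ∑ j, (f j u - ∑ i', β j i' * gbar i' u) ^ 2 :=
        (Finset.sum_biUnion (fun i _ i' _ hii' => hdisj i i' hii')).symm
    _ = ∑ u, ∑ j, (f j u - ∑ i', β j i' * gbar i' u) ^ 2 := by rw [hcover]
    _ = ∑ j, ∑ u, (f j u - ∑ i', β j i' * gbar i' u) ^ 2 := Finset.sum_comm
    _ ≤ ∑ _j : Fin k, 1.1 * k / Υ := Finset.sum_le_sum fun j _ => hstruct j
    _ = 1.1 * k ^ 2 / Υ := by
        rw [Finset.sum_const, Finset.card_univ, Fintype.card_fin, nsmul_eq_mul]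
        field_simp
end

section
/- Let p, q ∈ ℝ^k be nonzero vectors with ⟨p/‖p‖, q/‖q‖⟩ ≤ 1 - ζ²/4 for some ζ ∈ (0,1], and suppose ‖p‖ ≥ ‖q‖. Then ‖p - q‖² ≥ (ζ²/8)·min{‖p‖², 16 ‖q‖²}. -/
open scoped RealInnerProductSpace

/-- If `p, q ∈ ℝᵏ` are nonzero, `⟨p/‖p‖, q/‖q‖⟩ ≤ 1 - ζ²/4` for
some `ζ ∈ (0,1]`, and `‖p‖ ≥ ‖q‖`, then
`‖p - q‖² ≥ (ζ²/8) · min{‖p‖², 16 ‖q‖²}`. -/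
theorem stmt_9 (k : ℕ) (p q : EuclideanSpace ℝ (Fin k))
    (hp : p ≠ 0) (hq : q ≠ 0)
    (ζ : ℝ) (hζ0 : 0 < ζ) (hζ1 : ζ ≤ 1)
    (hinner : ⟪(1 / ‖p‖) • p, (1 / ‖q‖) • q⟫ ≤ 1 - ζ ^ 2 / 4)
    (hnorm : ‖q‖ ≤ ‖p‖) :
    ζ ^ 2 / 8 * min (‖p‖ ^ 2) (16 * ‖q‖ ^ 2) ≤ ‖p - q‖ ^ 2 := by
  have ha : (0:ℝ) < ‖p‖ := norm_pos_iff.mpr hp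
  have hb : (0:ℝ) < ‖q‖ := norm_pos_iff.mpr hq
  rw [real_inner_smul_left, real_inner_smul_right] at hinner
  have hip : ⟪p, q⟫ ≤ (1 - ζ ^ 2 / 4) * (‖p‖ * ‖q‖) := by
    rw [div_mul_eq_mul_div, one_mul, div_mul_eq_mul_div, div_le_iff₀ ha, div_le_iff₀ hb] at hinner
    nlinarith [hinner]
  have hsq : ‖p - q‖ ^ 2 = ‖p‖ ^ 2 - 2 * ⟪p, q⟫ + ‖q‖ ^ 2 := by
    rw [@norm_sub_sq_real]
  rcases le_total (‖p‖ ^ 2) (16 * ‖q‖ ^ 2) with h | h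
  · rw [min_eq_left h]
    nlinarith [sq_nonneg (‖p‖ - ‖q‖), mul_pos ha hb, sq_nonneg ζ, sq_nonneg (ζ*(‖p‖-‖q‖))]
  · rw [min_eq_right h]
    nlinarith [sq_nonneg (‖p‖ - ‖q‖), mul_pos ha hb, sq_nonneg ζ, sq_nonneg (ζ*‖q‖), sq_nonneg (‖p‖ - 4*‖q‖)]
end

section
/- Under the gap assumption Υ = Ω(k³), the approximate centers p^(i) are pairwise well separated: for every i ≠ j, ‖p^(i) - p^(j)‖² ≥ ζ²/(10 min{vol(S_i), vol(S_j)}), where ζ = 1/(10√k). -/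
lemma key_ineq (ζ a b S1 S2 C : ℝ) (hζpos : 0 < ζ) (hζle : ζ ≤ 1/10)
    (hb : 0 < b) (hab : b ≤ a)
    (hS1 : (1 - ζ/10)^2 ≤ S1) (hS2 : S2 ≤ (1 + ζ/10)^2)
    (hC : 2*C ≤ S1 + S2 - ζ^2) :
    ζ^2 * a^2 / 10 ≤ a^2*S1 + b^2*S2 - 2*a*b*C := by
  nlinarith [sq_nonneg (ζ*b - (a-b)), sq_nonneg (a-b), mul_pos hb (lt_of_lt_of_le hb hab),
    mul_nonneg (sub_nonneg.2 hab) hb.le, sq_nonneg a, sq_nonneg b,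
    mul_nonneg (mul_nonneg (sub_nonneg.2 hab) hb.le) hζpos.le,
    mul_nonneg (mul_nonneg (sub_nonneg.2 hab) (sub_nonneg.2 hab)) hζpos.le]

lemma key_vec (k : ℕ) (ζ a b : ℝ) (u w : Fin k → ℝ)
    (hζpos : 0 < ζ) (hζle : ζ ≤ 1/10) (hb : 0 < b) (hab : b ≤ a)
    (hu : (1 - ζ/10)^2 ≤ ∑ ℓ, u ℓ ^ 2) (hw : ∑ ℓ, w ℓ ^ 2 ≤ (1 + ζ/10)^2)
    (hd : ζ^2 ≤ ∑ ℓ, (u ℓ - w ℓ)^2) :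
    ζ^2 * a^2 / 10 ≤ ∑ ℓ, (a * u ℓ - b * w ℓ)^2 := by
  have eT : ∑ ℓ, (a * u ℓ - b * w ℓ)^2
      = a^2 * (∑ ℓ, u ℓ ^2) + b^2 * (∑ ℓ, w ℓ ^2) - 2*a*b*(∑ ℓ, u ℓ * w ℓ) := by
    simp only [Finset.mul_sum, ← Finset.sum_add_distrib, ← Finset.sum_sub_distrib]
    exact Finset.sum_congr rfl fun ℓ _ => by ring
  have eD : ∑ ℓ, (u ℓ - w ℓ)^2
      = (∑ ℓ, u ℓ ^2) + (∑ ℓ, w ℓ ^2) - 2*(∑ ℓ, u ℓ * w ℓ) := by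
    simp only [Finset.mul_sum, ← Finset.sum_add_distrib, ← Finset.sum_sub_distrib]
    exact Finset.sum_congr rfl fun ℓ _ => by ring
  rw [eT]
  exact key_ineq ζ a b _ _ _ hζpos hζle hb hab hu hw (by linarith [eD ▸ hd])

/-- Under the gap assumption `Υ = Ω(k³)`, the approximate centers
`p i = (1/√vol(S i))(β 1 i, …, β k i)` are pairwise well separated:
`‖p i - p j‖² ≥ ζ²/(10 min{vol(S i), vol(S j)})` for `i ≠ j`, where
`ζ = 1/(10 √k)`. The hypotheses are the row-separation property (for all
`ℓ ≠ j` some coordinate `i` has `|β i ℓ - β i j| ≥ ζ`) and that each row vector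
`(β 1 i, …, β k i)` has norm in `(1 - ζ/10, 1 + ζ/10)`. -/
theorem stmt_10 (k : ℕ) (hk : 1 ≤ k) (Υ : ℝ) (hΥ : 100 * (k : ℝ) ^ 3 ≤ Υ)
    (ζ : ℝ) (hζ : ζ = 1 / (10 * Real.sqrt k))
    (β : Fin k → Fin k → ℝ)
    (hsep : ∀ ℓ j : Fin k, ℓ ≠ j → ∃ i : Fin k, ζ ≤ |β i ℓ - β i j|)
    (hrow : ∀ i : Fin k,
      1 - ζ / 10 < Real.sqrt (∑ j, β j i ^ 2) ∧ Real.sqrt (∑ j, β j i ^ 2) < 1 + ζ / 10)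
    (vol : Fin k → ℝ) (hvol : ∀ i, 0 < vol i)
    (p : Fin k → Fin k → ℝ)
    (hp : ∀ i j, p i j = β j i / Real.sqrt (vol i)) :
    ∀ i j : Fin k, i ≠ j →
      ζ ^ 2 / (10 * min (vol i) (vol j)) ≤ ∑ ℓ, (p i ℓ - p j ℓ) ^ 2 := by
  have hsk : (1:ℝ) ≤ Real.sqrt k := by
    rw [show (1:ℝ) = Real.sqrt 1 by simp]
    exact Real.sqrt_le_sqrt (by exact_mod_cast hk)
  have hζpos : 0 < ζ := by rw [hζ]; positivity
  have hζle : ζ ≤ 1/10 := by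
    rw [hζ]
    rw [div_le_div_iff₀ (by linarith) (by norm_num)]
    linarith
  have hlo : ∀ i, (1 - ζ/10)^2 ≤ ∑ j, β j i ^ 2 := by
    intro i
    have h0 : (0:ℝ) ≤ ∑ j, β j i ^ 2 := Finset.sum_nonneg fun _ _ => sq_nonneg _
    nlinarith [(hrow i).1, Real.sq_sqrt h0, Real.sqrt_nonneg (∑ j, β j i ^ 2)]
  have hhi : ∀ i, ∑ j, β j i ^ 2 ≤ (1 + ζ/10)^2 := by
    intro i
    have h0 : (0:ℝ) ≤ ∑ j, β j i ^ 2 := Finset.sum_nonneg fun _ _ => sq_nonneg _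
    nlinarith [(hrow i).2, Real.sq_sqrt h0, Real.sqrt_nonneg (∑ j, β j i ^ 2)]
  have hD : ∀ i j : Fin k, i ≠ j → ζ^2 ≤ ∑ ℓ, (β ℓ i - β ℓ j)^2 := by
    intro i j hij
    obtain ⟨m, hm⟩ := hsep i j hij
    calc ζ^2 ≤ |β m i - β m j|^2 := by
          have := abs_nonneg (β m i - β m j)
          nlinarith
      _ = (β m i - β m j)^2 := sq_abs _
      _ ≤ ∑ ℓ, (β ℓ i - β ℓ j)^2 :=
          Finset.single_le_sum (f := fun ℓ => (β ℓ i - β ℓ j)^2) (fun ℓ _ => sq_nonneg _) (Finset.mem_univ m)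
  intro i j hij
  rcases le_total (vol i) (vol j) with h | h
  · set a := (Real.sqrt (vol i))⁻¹ with ha
    set b := (Real.sqrt (vol j))⁻¹ with hbdef
    have hb : 0 < b := inv_pos.2 (Real.sqrt_pos.2 (hvol _))
    have hab : b ≤ a := by
      apply inv_anti₀ (Real.sqrt_pos.2 (hvol i)) (Real.sqrt_le_sqrt h)
    have ha2 : a^2 = (vol i)⁻¹ := by
      rw [ha, inv_pow, Real.sq_sqrt (hvol i).le]
    have hgoal : ζ^2 / (10 * min (vol i) (vol j)) = ζ^2 * a^2 / 10 := by
      rw [min_eq_left h, ha2]; ring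
    rw [hgoal]
    have hsum : ∑ ℓ, (p i ℓ - p j ℓ)^2 = ∑ ℓ, (a * β ℓ i - b * β ℓ j)^2 := by
      refine Finset.sum_congr rfl fun ℓ _ => ?_
      rw [hp i ℓ, hp j ℓ]; simp only [div_eq_mul_inv]; ring
    rw [hsum]
    exact key_vec k ζ a b (fun ℓ => β ℓ i) (fun ℓ => β ℓ j) hζpos hζle hb hab
      (hlo i) (hhi j) (hD i j hij)
  · set a := (Real.sqrt (vol j))⁻¹ with ha
    set b := (Real.sqrt (vol i))⁻¹ with hbdef
    have hb : 0 < b := inv_pos.2 (Real.sqrt_pos.2 (hvol _))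
    have hab : b ≤ a := by
      apply inv_anti₀ (Real.sqrt_pos.2 (hvol j)) (Real.sqrt_le_sqrt h)
    have ha2 : a^2 = (vol j)⁻¹ := by
      rw [ha, inv_pow, Real.sq_sqrt (hvol j).le]
    have hgoal : ζ^2 / (10 * min (vol i) (vol j)) = ζ^2 * a^2 / 10 := by
      rw [min_eq_right h, ha2]; ring
    rw [hgoal]
    have hsum : ∑ ℓ, (p i ℓ - p j ℓ)^2 = ∑ ℓ, (a * β ℓ j - b * β ℓ i)^2 := by
      refine Finset.sum_congr rfl fun ℓ _ => ?_
      rw [hp i ℓ, hp j ℓ]; simp only [div_eq_mul_inv]; ring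
    rw [hsum]
    exact key_vec k ζ a b (fun ℓ => β ℓ j) (fun ℓ => β ℓ i) hζpos hζle hb hab
      (hlo j) (hhi i) (hD j i hij.symm)
end

section
/- Suppose a partition A_1,...,A_k satisfies, under some permutation σ, vol(A_i △ S_{σ(i)}) ≤ 2ε vol(S_{σ(i)}) for all i, with ε < 1/2. Then for every i, φ_G(A_i) ≤ (2ε + φ_G(S_{σ(i)}))/(1 - 2ε). -/
/-- If a partition `A 1, …, A k` satisfies, under some permutation
`σ`, `vol(A i △ S (σ i)) ≤ 2 ε vol(S (σ i))` for all `i`, with `ε < 1/2`, then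
every `A i` has conductance `φ(A i) ≤ (2ε + φ(S (σ i)))/(1 - 2ε)`. Here
`φ(T) = |E(T, V∖T)|/vol(T)` and `vol(T) = ∑_{u∈T} deg u`. -/
theorem stmt_14 (n k : ℕ) (G : SimpleGraph (Fin n)) [DecidableRel G.Adj]
    (A S : Fin k → Finset (Fin n))
    (hAdisj : ∀ i j, i ≠ j → Disjoint (A i) (A j))
    (hAcover : Finset.univ.biUnion A = Finset.univ)
    (hSdisj : ∀ i j, i ≠ j → Disjoint (S i) (S j))
    (hScover : Finset.univ.biUnion S = Finset.univ)
    (vol : Finset (Fin n) → ℝ)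
    (hvol : ∀ T, vol T = ∑ u ∈ T, (G.degree u : ℝ))
    (cut : Finset (Fin n) → ℝ)
    (hcut : ∀ T, cut T = ∑ u ∈ T, ∑ v ∈ Tᶜ, (if G.Adj u v then (1 : ℝ) else 0))
    (φ : Finset (Fin n) → ℝ)
    (hφ : ∀ T, φ T = cut T / vol T)
    (hSvol : ∀ i, 0 < vol (S i))
    (ε : ℝ) (hε0 : 0 ≤ ε) (hε : ε < 1 / 2)
    (σ : Equiv.Perm (Fin k))
    (hclose : ∀ i : Fin k, vol (symmDiff (A i) (S (σ i))) ≤ 2 * ε * vol (S (σ i))) :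
    ∀ i : Fin k, φ (A i) ≤ (2 * ε + φ (S (σ i))) / (1 - 2 * ε) := by
  intro i
  set B := S (σ i) with hB
  set P := A i with hP
  set f : Fin n → Fin n → ℝ := fun u v => if G.Adj u v then 1 else 0 with hf
  have hf0 : ∀ u v, 0 ≤ f u v := by
    intro u v; simp only [hf]; split <;> norm_num
  have hfsym : ∀ u v, f u v = f v u := by
    intro u v; simp only [hf, G.adj_comm]
  have hdegeq : ∀ u : Fin n, ∑ v : Fin n, f u v = (G.degree u : ℝ) := by
    intro u
    simp only [hf]
    rw [Finset.sum_boole]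
    congr 1
    rw [SimpleGraph.degree, SimpleGraph.neighborFinset_eq_filter]
  have hdeg : ∀ (u : Fin n) (T : Finset (Fin n)), ∑ v ∈ T, f u v ≤ (G.degree u : ℝ) := by
    intro u T
    rw [← hdegeq u]
    exact Finset.sum_le_sum_of_subset_of_nonneg (Finset.subset_univ T)
      (fun v _ _ => hf0 u v)
  -- generic vol facts
  have hvol_nonneg : ∀ T, 0 ≤ vol T := by
    intro T; rw [hvol]; exact Finset.sum_nonneg fun u _ => Nat.cast_nonneg _
  have hvol_union : ∀ T U : Finset (Fin n), Disjoint T U → vol (T ∪ U) = vol T + vol U := by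
    intro T U h; rw [hvol, hvol, hvol, Finset.sum_union h]
  have hvol_mono : ∀ T U : Finset (Fin n), T ⊆ U → vol T ≤ vol U := by
    intro T U h; rw [hvol, hvol]
    exact Finset.sum_le_sum_of_subset_of_nonneg h (fun u _ _ => Nat.cast_nonneg _)
  have hcut_nonneg : ∀ T, 0 ≤ cut T := by
    intro T; rw [hcut]
    exact Finset.sum_nonneg fun u _ => Finset.sum_nonneg fun v _ => hf0 u v
  -- vol of symmDiff
  have hsd : symmDiff P B = (P \ B) ∪ (B \ P) := by
    ext v; simp [Finset.mem_symmDiff, Finset.mem_sdiff, Finset.mem_union]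
  have hsd_disj : Disjoint (P \ B) (B \ P) := disjoint_sdiff_sdiff
  have hvol_sd : vol (symmDiff P B) = vol (P \ B) + vol (B \ P) := by
    rw [hsd, hvol_union _ _ hsd_disj]
  -- cut bound: cut P ≤ vol (P \ B) + cut B + vol (B \ P)
  have hcutA : cut P ≤ vol (P \ B) + (cut B + vol (B \ P)) := by
    have hsplit : cut P = ∑ u ∈ P \ B, ∑ v ∈ Pᶜ, f u v
        + ∑ u ∈ P ∩ B, ∑ v ∈ Pᶜ, f u v := by
      rw [hcut, ← Finset.sum_union (Finset.disjoint_sdiff_inter P B),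
        Finset.sdiff_union_inter]
    have hT1 : ∑ u ∈ P \ B, ∑ v ∈ Pᶜ, f u v ≤ vol (P \ B) := by
      rw [hvol]
      exact Finset.sum_le_sum fun u _ => hdeg u _
    have hsplit2 : ∑ u ∈ P ∩ B, ∑ v ∈ Pᶜ, f u v
        = ∑ u ∈ P ∩ B, ∑ v ∈ Pᶜ \ B, f u v + ∑ u ∈ P ∩ B, ∑ v ∈ Pᶜ ∩ B, f u v := by
      rw [← Finset.sum_add_distrib]
      refine Finset.sum_congr rfl fun u _ => ?_
      rw [← Finset.sum_union (Finset.disjoint_sdiff_inter Pᶜ B),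
        Finset.sdiff_union_inter]
    have hT2a : ∑ u ∈ P ∩ B, ∑ v ∈ Pᶜ \ B, f u v ≤ cut B := by
      rw [hcut]
      calc ∑ u ∈ P ∩ B, ∑ v ∈ Pᶜ \ B, f u v
          ≤ ∑ u ∈ P ∩ B, ∑ v ∈ Bᶜ, f u v := by
            refine Finset.sum_le_sum fun u _ => ?_
            refine Finset.sum_le_sum_of_subset_of_nonneg ?_ (fun v _ _ => hf0 u v)
            intro v hv
            simp only [Finset.mem_sdiff, Finset.mem_compl] at hv ⊢
            exact hv.2
        _ ≤ ∑ u ∈ B, ∑ v ∈ Bᶜ, f u v := by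
            refine Finset.sum_le_sum_of_subset_of_nonneg Finset.inter_subset_right
              (fun u _ _ => Finset.sum_nonneg fun v _ => hf0 u v)
    have hT2b : ∑ u ∈ P ∩ B, ∑ v ∈ Pᶜ ∩ B, f u v ≤ vol (B \ P) := by
      rw [Finset.sum_comm]
      have heq : Pᶜ ∩ B = B \ P := by
        ext v; simp [Finset.mem_inter, Finset.mem_sdiff, and_comm]
      rw [heq, hvol]
      refine Finset.sum_le_sum fun v _ => ?_
      calc ∑ u ∈ P ∩ B, f u v = ∑ u ∈ P ∩ B, f v u :=
            Finset.sum_congr rfl fun u _ => hfsym u v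
        _ ≤ (G.degree v : ℝ) := hdeg v _
    rw [hsplit, hsplit2]
    linarith
  have hcutA' : cut P ≤ 2 * ε * vol B + cut B := by
    have := hclose i
    rw [hvol_sd] at this
    linarith
  -- volume lower bound
  have hvolA : (1 - 2 * ε) * vol B ≤ vol P := by
    have h1 : vol B = vol (B ∩ P) + vol (B \ P) := by
      have hBeq : B = (B ∩ P) ∪ (B \ P) := by
        ext v; simp [Finset.mem_inter, Finset.mem_sdiff, Finset.mem_union]; tauto
      rw [← hvol_union (B ∩ P) (B \ P) (Finset.disjoint_sdiff_inter B P).symm, ← hBeq]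
    have h2 : vol (B \ P) ≤ 2 * ε * vol B := by
      have hsub : B \ P ⊆ symmDiff P B := by
        rw [hsd]; exact Finset.subset_union_right
      exact le_trans (hvol_mono _ _ hsub) (hclose i)
    have h3 : vol (B ∩ P) ≤ vol P := hvol_mono _ _ Finset.inter_subset_right
    linarith
  have hBpos : 0 < vol B := hSvol (σ i)
  have hc : 0 < (1 - 2 * ε) * vol B := by
    apply mul_pos (by linarith) hBpos
  have hvolApos : 0 < vol P := lt_of_lt_of_le hc hvolA
  rw [hφ, hφ]
  have step1 : cut P / vol P ≤ cut P / ((1 - 2 * ε) * vol B) :=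
    div_le_div_of_nonneg_left (hcut_nonneg P) hc hvolA
  have step2 : cut P / ((1 - 2 * ε) * vol B) ≤ (2 * ε * vol B + cut B) / ((1 - 2 * ε) * vol B) :=
    by gcongr
  have step3 : (2 * ε * vol B + cut B) / ((1 - 2 * ε) * vol B)
      = (2 * ε + cut B / vol B) / (1 - 2 * ε) := by
    have hnum : 2 * ε * vol B + cut B = (2 * ε + cut B / vol B) * vol B := by
      field_simp
    rw [hnum, mul_div_mul_right _ _ (ne_of_gt hBpos)]
  linarith
end

section
/- For the heat kernel embedding x_t(u) = (1/√d_u)(e^{-tλ_1}f_1(u),...,e^{-t λ_n}f_n(u)), if t satisfies t ≥ 3 log n / λ_{k+1} and t ≤ 1/(2λ_k), then for all u, v: (1/(2e))·‖F(u)-F(v)‖² ≤ ‖x_t(u)-x_t(v)‖² ≤ ‖F(u)-F(v)‖² + n^{-5}, where F(u) = (1/√d_u)(f_1(u),...,f_k(u)). -/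
/-!
With `a i = (f i u / √(d u) - f i v / √(d v))²`, the squared embedding distance is
`∑ i, e^{-2tλ_i} a i` and `‖F u - F v‖² = ∑_{i<k} a i`. The heat weights lie in `[1/e, 1]`
for `i < k` and are at most `n⁻⁶` for `i ≥ k`, while `∑ i, a i ≤ 2 (1/d_u + 1/d_v) ≤ 4`
because the columns of `f` are unit vectors; finally `4 n⁻⁶ ≤ n⁻⁵` as `n ≥ 4`.
-/

open Finset Real

lemma sum_castLE_eq_sum_Iio {M : Type*} [AddCommMonoid M] {k n : ℕ} (h : k < n)
    (g : Fin n → M) : ∑ j : Fin k, g (Fin.castLE h.le j) = ∑ i ∈ Iio ⟨k, h⟩, g i := by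
  have hmap : univ.map (Fin.castLEEmb h.le) = Iio ⟨k, h⟩ := by
    ext i
    simp only [mem_map, mem_univ, true_and, Fin.castLEEmb_apply, mem_Iio, Fin.lt_def]
    exact ⟨fun ⟨j, hj⟩ => hj ▸ j.isLt, fun hi => ⟨⟨i, hi⟩, rfl⟩⟩
  rw [← hmap, sum_map]
  rfl

lemma mul_sum_le_sum_mul {ι : Type*} [Fintype ι] (S : Finset ι) {w a : ι → ℝ} {c : ℝ}
    (hw : ∀ i, 0 ≤ w i) (ha : ∀ i, 0 ≤ a i) (hc : ∀ i ∈ S, c ≤ w i) :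
    c * ∑ i ∈ S, a i ≤ ∑ i, w i * a i :=
  calc c * ∑ i ∈ S, a i = ∑ i ∈ S, c * a i := mul_sum _ _ _
    _ ≤ ∑ i ∈ S, w i * a i := sum_le_sum fun i hi => mul_le_mul_of_nonneg_right (hc i hi) (ha i)
    _ ≤ ∑ i, w i * a i := sum_le_univ_sum_of_nonneg fun i => mul_nonneg (hw i) (ha i)

lemma sum_mul_le_sum_add_mul_sum_compl {ι : Type*} [Fintype ι] [DecidableEq ι] (S : Finset ι)
    {w a : ι → ℝ} {ε : ℝ} (ha : ∀ i, 0 ≤ a i) (hS : ∀ i ∈ S, w i ≤ 1)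
    (hSc : ∀ i ∉ S, w i ≤ ε) :
    ∑ i, w i * a i ≤ ∑ i ∈ S, a i + ε * ∑ i ∈ Sᶜ, a i := by
  rw [← sum_add_sum_compl S, mul_sum]
  exact add_le_add (sum_le_sum fun i hi => mul_le_of_le_one_left (ha i) (hS i hi))
    (sum_le_sum fun i hi => mul_le_mul_of_nonneg_right (hSc i (mem_compl.mp hi)) (ha i))

lemma sum_sq_sub_div_sqrt_le_four {ι : Type*} [Fintype ι] {p q : ι → ℝ} {a b : ℝ}
    (hp : ∑ i, p i * p i = 1) (hq : ∑ i, q i * q i = 1) (ha : 1 ≤ a) (hb : 1 ≤ b) :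
    ∑ i, (p i / √a - q i / √b) ^ 2 ≤ 4 := by
  have hnorm : ∀ (r : ι → ℝ) {c : ℝ}, 1 ≤ c → ∑ i, r i * r i = 1 →
      ∑ i, (r i / √c) ^ 2 ≤ 1 := by
    intro r c hc hr
    simp only [div_pow, sq_sqrt (zero_le_one.trans hc)]
    rw [← sum_div]
    simpa only [sq, hr] using (div_le_one (one_pos.trans_le hc)).mpr hc
  calc ∑ i, (p i / √a - q i / √b) ^ 2
      ≤ ∑ i, (2 * (p i / √a) ^ 2 + 2 * (q i / √b) ^ 2) :=
        sum_le_sum fun i _ => by nlinarith [sq_nonneg (p i / √a + q i / √b)]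
    _ ≤ 4 := by
        rw [sum_add_distrib, ← mul_sum, ← mul_sum]
        linarith [hnorm p ha hp, hnorm q hb hq]

lemma inv_two_mul_exp_one_le_exp_neg_sq {s : ℝ} (hs : 2 * s ≤ 1) :
    1 / (2 * exp 1) ≤ exp (-s) ^ 2 :=
  calc 1 / (2 * exp 1) ≤ exp (-1) := by
        rw [exp_neg, one_div]
        exact inv_anti₀ (exp_pos 1) (by linarith [exp_pos 1])
    _ ≤ exp (-s) ^ 2 := by
        rw [← exp_nat_mul]
        exact exp_le_exp.mpr (by push_cast; linarith)

lemma exp_neg_sq_le_one {s : ℝ} (hs : 0 ≤ s) : exp (-s) ^ 2 ≤ 1 :=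
  pow_le_one₀ (exp_pos _).le (exp_le_one_iff.mpr (by linarith))

lemma exp_neg_sq_le_zpow {x s : ℝ} (hx : 0 < x) (hs : 3 * log x ≤ s) :
    exp (-s) ^ 2 ≤ x ^ (-(6 : ℤ)) := by
  rw [← exp_nat_mul, ← rpow_intCast, rpow_def_of_pos hx]
  exact exp_le_exp.mpr (by push_cast; linarith)

lemma mul_zpow_sub_one_le {x c : ℝ} (hx : 0 < x) (hc : c ≤ x) (m : ℤ) :
    c * x ^ (m - 1) ≤ x ^ m := by
  calc c * x ^ (m - 1) ≤ x * x ^ (m - 1) := mul_le_mul_of_nonneg_right hc (by positivity)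
    _ = x ^ m := by rw [zpow_sub_one₀ hx.ne', mul_comm, inv_mul_cancel_right₀ hx.ne']

/-- For the heat kernel embedding
`x_t(u) = (1/√d_u)(e^{-t λ_1} f_1(u), …, e^{-t λ_n} f_n(u))`, if `t` satisfies
`t λ_{k+1} ≥ 3 log n` and `2 t λ_k ≤ 1`, then for all vertices `u, v`:
`(1/(2e)) ‖F(u) - F(v)‖² ≤ ‖x_t(u) - x_t(v)‖² ≤ ‖F(u) - F(v)‖² + n^{-5}`,
where `F(u) = (1/√d_u)(f_1(u), …, f_k(u))`. -/
theorem stmt_16 (n k : ℕ) (hkn : k < n) (hn : 4 ≤ n)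
    (d : Fin n → ℝ) (hd : ∀ u, 1 ≤ d u)
    (lam : Fin n → ℝ) (hmono : Monotone lam)
    (hnonneg : ∀ i, 0 ≤ lam i)
    (f : Fin n → Fin n → ℝ)
    (hcols : ∀ u v : Fin n, (∑ i, f i u * f i v) = if u = v then 1 else 0)
    (t : ℝ) (ht0 : 0 < t)
    (ht1 : 3 * Real.log n ≤ t * lam ⟨k, hkn⟩)
    (ht2 : 2 * t * lam ⟨k - 1, by omega⟩ ≤ 1)
    (x : Fin n → Fin n → ℝ)
    (hx : ∀ u i, x u i = Real.exp (-(t * lam i)) * f i u / Real.sqrt (d u))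
    (F : Fin n → Fin k → ℝ)
    (hF : ∀ (u : Fin n) (j : Fin k), F u j = f (Fin.castLE hkn.le j) u / Real.sqrt (d u)) :
    ∀ u v : Fin n,
      (1 / (2 * Real.exp 1)) * (∑ j, (F u j - F v j) ^ 2) ≤ (∑ i, (x u i - x v i) ^ 2) ∧
      (∑ i, (x u i - x v i) ^ 2) ≤ (∑ j, (F u j - F v j) ^ 2) + (n : ℝ) ^ (-(5 : ℤ)) := by
  intro u v
  set a : Fin n → ℝ := fun i => (f i u / √(d u) - f i v / √(d v)) ^ 2
  set S := Iio (⟨k, hkn⟩ : Fin n)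
  have ha : ∀ i, 0 ≤ a i := fun i => sq_nonneg _
  have hx_sum : ∑ i, (x u i - x v i) ^ 2 = ∑ i, exp (-(t * lam i)) ^ 2 * a i :=
    sum_congr rfl fun i _ => by rw [hx, hx]; ring
  have hF_sum : ∑ j, (F u j - F v j) ^ 2 = ∑ i ∈ S, a i := by
    simp only [hF]
    exact sum_castLE_eq_sum_Iio hkn a
  rw [hx_sum, hF_sum]
  constructor
  · refine mul_sum_le_sum_mul S (fun i => sq_nonneg _) ha fun i hi => ?_
    have hlam : lam i ≤ lam ⟨k - 1, by omega⟩ :=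
      hmono (by simp only [S, mem_Iio, Fin.lt_def, Fin.le_def] at hi ⊢; omega)
    exact inv_two_mul_exp_one_le_exp_neg_sq (by nlinarith)
  · have hn4 : (4 : ℝ) ≤ n := by exact_mod_cast hn
    have hn0 : (0 : ℝ) < n := by linarith
    have ha_compl : ∑ i ∈ Sᶜ, a i ≤ 4 :=
      (sum_le_univ_sum_of_nonneg ha).trans <| sum_sq_sub_div_sqrt_le_four
        ((hcols u u).trans (if_pos rfl)) ((hcols v v).trans (if_pos rfl)) (hd u) (hd v)
    calc ∑ i, exp (-(t * lam i)) ^ 2 * a i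
        ≤ ∑ i ∈ S, a i + (n : ℝ) ^ (-(6 : ℤ)) * ∑ i ∈ Sᶜ, a i := by
          refine sum_mul_le_sum_add_mul_sum_compl S ha
            (fun i _ => exp_neg_sq_le_one (mul_nonneg ht0.le (hnonneg i))) fun i hi => ?_
          have hlam : lam ⟨k, hkn⟩ ≤ lam i := hmono (not_lt.mp (by simpa [S] using hi))
          exact exp_neg_sq_le_zpow hn0 (ht1.trans (by gcongr))
      _ ≤ ∑ i ∈ S, a i + 4 * (n : ℝ) ^ (-5 - 1 : ℤ) := by
          rw [mul_comm, show (-5 - 1 : ℤ) = -6 by norm_num]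
          gcongr
      _ ≤ ∑ i ∈ S, a i + (n : ℝ) ^ (-(5 : ℤ)) := by
          gcongr
          exact mul_zpow_sub_one_le hn0 hn4 (-5)
end
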